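/- arXiv:2308.01973 — 3 statements merged into one kernel-verified Lean document; each statement's English description precedes it below -/
import Mathlib

section
/- Let F be a complex of S-modules with differential δ₁ of degree −1, and suppose δ₂, ..., δ_i are degree-lowering endomorphisms of the graded module F (δ_j lowers the grading index by j) satisfying, for every 2 ≤ p ≤ i, the relation Σ_{k=1}^{p} δ_k δ_{p+1−k} = 0. Then the map Θ := Σ_{j=2}^{i} δ_j δ_{i+2−j} commutes with δ₁, i.e., Θ ∘ δ₁ = δ₁ ∘ Θ. -/
/-- Let `F` be a complex of `S`-modules with differential `δ 1` of degree `-1` (realized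
internally: `M = ⊕ₙ G n` and each `δ j` lowers the grading index by `j`), and suppose
`δ 2, ..., δ i` satisfy, for every `2 ≤ p ≤ i`, the relation `∑_{k=1}^{p} δ k * δ (p+1-k) = 0`.
Then the map `Θ = ∑_{j=2}^{i} δ j * δ (i+2-j)` commutes with `δ 1`. -/
theorem stmt6 {S M : Type*} [CommRing S] [AddCommGroup M] [Module S M]
    (G : ℤ → Submodule S M) (δ : ℕ → Module.End S M) (i : ℕ)
    (hlow : ∀ (j : ℕ) (n : ℤ), ∀ x ∈ G n, δ j x ∈ G (n - (j : ℤ)))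
    (hd2 : δ 1 * δ 1 = 0)
    (hrel : ∀ p, 2 ≤ p → p ≤ i → ∑ k ∈ Finset.Icc 1 p, δ k * δ (p + 1 - k) = 0) :
    (∑ j ∈ Finset.Icc 2 i, δ j * δ (i + 2 - j)) * δ 1 =
      δ 1 * ∑ j ∈ Finset.Icc 2 i, δ j * δ (i + 2 - j) := by
  -- top term isolated
  have key1 : ∀ p, 2 ≤ p → p ≤ i →
      δ p * δ 1 = -∑ k ∈ Finset.Icc 1 (p - 1), δ k * δ (p + 1 - k) := by
    intro p h2 hi
    have h := hrel p h2 hi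
    have hset : Finset.Icc 1 p = insert p (Finset.Icc 1 (p - 1)) := by
      ext x; simp; omega
    rw [hset, Finset.sum_insert (by simp; omega)] at h
    have : p + 1 - p = 1 := by omega
    rw [this] at h
    linear_combination (norm := abel) h
  -- bottom term isolated
  have key2 : ∀ p, 2 ≤ p → p ≤ i →
      δ 1 * δ p = -∑ k ∈ Finset.Icc 2 p, δ k * δ (p + 1 - k) := by
    intro p h2 hi
    have h := hrel p h2 hi
    have hset : Finset.Icc 1 p = insert 1 (Finset.Icc 2 p) := by
      ext x; simp; omega
    rw [hset, Finset.sum_insert (by simp)] at h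
    have : p + 1 - 1 = p := by omega
    rw [this] at h
    linear_combination (norm := abel) h
  rw [Finset.sum_mul, Finset.mul_sum]
  have L : ∀ j ∈ Finset.Icc 2 i, δ j * δ (i + 2 - j) * δ 1 =
      -∑ k ∈ Finset.Icc 1 (i + 1 - j), δ j * (δ k * δ (i + 3 - j - k)) := by
    intro j hj
    simp only [Finset.mem_Icc] at hj
    rw [mul_assoc, key1 (i + 2 - j) (by omega) (by omega), mul_neg, Finset.mul_sum]
    congr 1
    apply Finset.sum_congr
    · congr 1; omega
    · intro k hk
      simp only [Finset.mem_Icc] at hk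
      congr 3
      omega
  have R : ∀ j ∈ Finset.Icc 2 i, δ 1 * (δ j * δ (i + 2 - j)) =
      -∑ k ∈ Finset.Icc 2 j, δ k * (δ (j + 1 - k) * δ (i + 2 - j)) := by
    intro j hj
    simp only [Finset.mem_Icc] at hj
    rw [← mul_assoc, key2 j (by omega) (by omega), neg_mul, Finset.sum_mul]
    exact congrArg Neg.neg (Finset.sum_congr rfl fun k hk => mul_assoc _ _ _)
  rw [Finset.sum_congr rfl L, Finset.sum_congr rfl R]
  simp only [Finset.sum_neg_distrib, neg_inj]
  rw [Finset.sum_sigma', Finset.sum_sigma']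
  apply Finset.sum_nbij' (i := fun x => ⟨x.1 + x.2 - 1, x.1⟩)
    (j := fun x => ⟨x.2, x.1 + 1 - x.2⟩)
  · intro a ha
    simp only [Finset.mem_sigma, Finset.mem_Icc] at ha ⊢
    try dsimp only at ha ⊢
    omega
  · intro a ha
    simp only [Finset.mem_sigma, Finset.mem_Icc] at ha ⊢
    try dsimp only at ha ⊢
    omega
  · intro a ha
    simp only [Finset.mem_sigma, Finset.mem_Icc] at ha
    ext <;> simp <;> omega
  · intro a ha
    simp only [Finset.mem_sigma, Finset.mem_Icc] at ha
    ext <;> simp <;> omega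
  · intro a ha
    simp only [Finset.mem_sigma, Finset.mem_Icc] at ha
    dsimp only
    congr 3 <;> omega
end

section
/- Let S = k[x₁, x₂] and consider, for a homogeneous polynomial f of degree 2, the 4×4 matrix ∂_f over S with rows (0, x₁, x₂, f), (0,0,0,−x₂), (0,0,0,x₁), (0,0,0,0). Then ∂_f² = 0 for every f, and the homology ker(∂_f)/im(∂_f) of the associated differential module on S ⊕ S(−1)² ⊕ S(−2) is isomorphic to S/(x₁, x₂). -/
set_option maxHeartbeats 1000000


open MvPolynomial

section Aux

variable {k : Type*} [Field k]

lemma primeX1 : Prime (X 1 : MvPolynomial (Fin 2) k) := by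
  have h0 : Prime (X 0 : MvPolynomial (Fin 2) k) := by
    rw [← MulEquiv.prime_iff (finSuccEquiv k 1).toMulEquiv]
    simpa [finSuccEquiv_X_zero] using Polynomial.prime_X
  rw [← MulEquiv.prime_iff (renameEquiv k (Equiv.swap (0:Fin 2) 1)).toMulEquiv] at h0
  simpa using h0

lemma X1_not_dvd_X0 : ¬ (X 1 : MvPolynomial (Fin 2) k) ∣ X 0 := by
  rintro ⟨c, hc⟩
  have := congrArg (eval (![1, 0] : Fin 2 → k)) hc
  simp at this

lemma koszul {v1 v2 : MvPolynomial (Fin 2) k}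
    (h : X 0 * v1 + X 1 * v2 = 0) :
    ∃ t : MvPolynomial (Fin 2) k, v1 = X 1 * t ∧ v2 = -(X 0 * t) := by
  have hdvd : (X 1 : MvPolynomial (Fin 2) k) ∣ X 0 * v1 :=
    ⟨-v2, by linear_combination h⟩
  rcases (primeX1.2.2 _ _ hdvd).resolve_left X1_not_dvd_X0 with ⟨t, ht⟩
  refine ⟨t, ht, ?_⟩
  have h2 : X 1 * v2 = X 1 * (-(X 0 * t)) := by
    rw [ht] at h; linear_combination h
  exact mul_left_cancel₀ (primeX1.1) h2

lemma mem_span_of_homog {f : MvPolynomial (Fin 2) k} (hf : f.IsHomogeneous 2) :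
    f ∈ Ideal.span {(X 0 : MvPolynomial (Fin 2) k), X 1} := by
  have himg : ({X 0, X 1} : Set (MvPolynomial (Fin 2) k)) = X '' Set.univ := by
    ext p
    simp only [Set.image_univ, Set.mem_range, Set.mem_insert_iff, Set.mem_singleton_iff]
    constructor
    · rintro (rfl | rfl) <;> exact ⟨_, rfl⟩
    · rintro ⟨i, rfl⟩; fin_cases i <;> simp
  rw [himg, mem_ideal_span_X_image]
  intro m hm
  have hdeg : m 0 + m 1 = 2 := by
    have := hf (mem_support_iff.mp hm)
    simpa [Finsupp.weight_apply, Finsupp.sum_fintype, Fin.sum_univ_two] using this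
  by_contra hcon
  push_neg at hcon
  simp only [Set.mem_univ, true_imp_iff] at hcon
  rw [hcon 0, hcon 1] at hdeg
  simp at hdeg

end Aux

/-- Let `S = k[x₁, x₂]` and, for a homogeneous polynomial `f` of degree 2, let `∂_f` be the
4×4 matrix over `S` with rows `(0, x₁, x₂, f)`, `(0,0,0,−x₂)`, `(0,0,0,x₁)`, `(0,0,0,0)`.
Then `∂_f² = 0` for every `f`, and the homology `ker ∂_f ⧸ im ∂_f` of the associated
differential module on `S ⊕ S(−1)² ⊕ S(−2)` is isomorphic to `S/(x₁, x₂)`. -/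
theorem stmt12 (k : Type*) [Field k]
    (f : MvPolynomial (Fin 2) k) (hf : f.IsHomogeneous 2) :
    let S := MvPolynomial (Fin 2) k
    let Df : Matrix (Fin 4) (Fin 4) S :=
      !![0, X 0, X 1, f;
         0, 0, 0, -X 1;
         0, 0, 0, X 0;
         0, 0, 0, 0]
    let d : (Fin 4 → S) →ₗ[S] (Fin 4 → S) := Df.mulVecLin
    Df * Df = 0 ∧
    Nonempty
      ((LinearMap.ker d ⧸ (LinearMap.range d).comap (LinearMap.ker d).subtype) ≃ₗ[S]
        (S ⧸ Ideal.span {(X 0 : S), X 1})) := by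
  intro S Df d
  set I : Ideal S := Ideal.span {(X 0 : S), X 1} with hI
  have hfI : f ∈ I := mem_span_of_homog hf
  have hmulVec : ∀ v : Fin 4 → S,
      Df.mulVec v = ![X 0 * v 1 + X 1 * v 2 + f * v 3, -(X 1 * v 3), X 0 * v 3, 0] := by
    intro v
    funext i
    fin_cases i <;>
      simp [Df, Matrix.mulVec, dotProduct, Fin.sum_univ_four] <;> ring
  have hd : ∀ v : Fin 4 → S,
      d v = ![X 0 * v 1 + X 1 * v 2 + f * v 3, -(X 1 * v 3), X 0 * v 3, 0] := by
    intro v; simpa [d, Matrix.mulVecLin] using hmulVec v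
  constructor
  · apply Matrix.ext
    intro i j
    fin_cases i <;> fin_cases j <;>
      simp [Df, Matrix.mul_apply, Fin.sum_univ_four, Matrix.vecHead, Matrix.vecTail] <;> ring
  · -- the homology isomorphism
    let φ : LinearMap.ker d →ₗ[S] S ⧸ I :=
      I.mkQ.comp ((LinearMap.proj 0).comp (LinearMap.ker d).subtype)
    have hker_mem : ∀ v : Fin 4 → S, v ∈ LinearMap.ker d ↔
        (X 0 * v 1 + X 1 * v 2 + f * v 3 = 0 ∧ v 3 = 0) := by
      intro v
      rw [LinearMap.mem_ker, hd v]
      constructor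
      · intro h
        have h0 := congrFun h 0
        have h2 := congrFun h 2
        simp at h0 h2
        exact ⟨h0, h2.resolve_left (X_ne_zero 0)⟩
      · rintro ⟨h0, h3⟩
        rw [h3, mul_zero, add_zero] at h0
        funext i
        fin_cases i <;> simp [h0, h3]
    have hsurj : Function.Surjective φ := by
      intro y
      obtain ⟨s, rfl⟩ := Submodule.Quotient.mk_surjective I y
      refine ⟨⟨![s, 0, 0, 0], ?_⟩, rfl⟩
      rw [hker_mem]
      simp
    have hker_eq : LinearMap.ker φ =
        (LinearMap.range d).comap (LinearMap.ker d).subtype := by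
      ext v
      obtain ⟨v, hv⟩ := v
      rw [hker_mem] at hv
      obtain ⟨hv0, hv3⟩ := hv
      simp only [LinearMap.mem_ker, Submodule.mem_comap, LinearMap.mem_range, φ,
        LinearMap.comp_apply, Submodule.subtype_apply, LinearMap.proj_apply,
        Ideal.Quotient.mk_eq_mk, Submodule.mkQ_apply]
      rw [Ideal.Quotient.eq_zero_iff_mem]
      constructor
      · intro hv0I
        -- build a preimage
        have hrel : X 0 * v 1 + X 1 * v 2 = 0 := by
          rw [hv3] at hv0; linear_combination hv0
        obtain ⟨t, ht1, ht2⟩ := koszul hrel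
        rw [Ideal.mem_span_pair] at hv0I hfI
        obtain ⟨a, b, hab⟩ := hv0I
        obtain ⟨p, q, hpq⟩ := hfI
        refine ⟨![0, a + p * t, b + q * t, -t], ?_⟩
        rw [show d ![0, a + p * t, b + q * t, -t] = _ from hd _]
        funext i
        fin_cases i <;> simp [ht1, ht2, hv3] <;> linear_combination hab + t * hpq
      · rintro ⟨w, hw⟩
        rw [hd w] at hw
        have h0 := congrFun hw 0
        simp only [Matrix.cons_val_zero] at h0
        rw [← h0]
        have hx0 : (X 0 : S) ∈ I := Ideal.subset_span (by simp)
        have hx1 : (X 1 : S) ∈ I := Ideal.subset_span (by simp)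
        exact add_mem (add_mem (I.mul_mem_right _ hx0)
          (by rw [mul_comm]; exact I.mul_mem_left _ hx1))
          (I.mul_mem_right _ hfI)
    exact ⟨(Submodule.quotEquivOfEq _ _ hker_eq.symm).trans
      (φ.quotKerEquivOfSurjective hsurj)⟩
end

section
/- Let D = ⊕_{i=0}^{ℓ} F_i be a free flag differential module anchored on a complex F (so the differential d restricted to F_i maps into ⊕_{j<i} F_j, and the induced maps F_i → F_{i−1} are the differentials of F). If F is a resolution of a module M (i.e., H_i(F) = 0 for i > 0 and H_0(F) = M), then the homology of the differential module D is isomorphic to M. -/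
section Aux

variable {S D : Type*} [CommRing S] [AddCommGroup D] [Module S D]

/-- The filtration submodule `⊕_{j<i} F j`. -/
def auxE (F : ℕ → Submodule S D) (i : ℕ) : Submodule S D :=
  ⨆ j, ⨆ _ : j < i, F j

lemma auxF_le_auxE (F : ℕ → Submodule S D) {j i : ℕ} (h : j < i) : F j ≤ auxE F i :=
  le_iSup_of_le j (le_iSup_of_le h le_rfl)

lemma auxE_zero (F : ℕ → Submodule S D) : auxE F 0 = ⊥ :=
  le_bot_iff.mp (iSup_le fun j => iSup_le fun h => absurd h (Nat.not_lt_zero j))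

lemma auxE_mono (F : ℕ → Submodule S D) {i k : ℕ} (h : i ≤ k) : auxE F i ≤ auxE F k :=
  iSup_le fun j => iSup_le fun hj => auxF_le_auxE F (lt_of_lt_of_le hj h)

lemma auxE_succ (F : ℕ → Submodule S D) (i : ℕ) : auxE F (i + 1) = auxE F i ⊔ F i := by
  apply le_antisymm
  · refine iSup_le fun j => iSup_le fun hj => ?_
    rcases Nat.lt_succ_iff_lt_or_eq.mp hj with h | h
    · exact le_trans (auxF_le_auxE F h) le_sup_left
    · subst h; exact le_sup_right
  · exact sup_le (auxE_mono F (Nat.le_succ i)) (auxF_le_auxE F (Nat.lt_succ_self i))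

variable {F : ℕ → Submodule S D} {d : Module.End S D}

lemma aux_dE (hflag : ∀ i, ∀ x ∈ F i, d x ∈ auxE F i) (i : ℕ) :
    ∀ x ∈ auxE F (i + 1), d x ∈ auxE F i := by
  have : auxE F (i + 1) ≤ Submodule.comap d (auxE F i) :=
    iSup_le fun j => iSup_le fun hj x hx =>
      auxE_mono F (Nat.lt_succ_iff.mp hj) (hflag j x hx)
  exact fun x hx => this hx

variable (hd2 : d * d = 0)
  (hflag : ∀ i, ∀ x ∈ F i, d x ∈ auxE F i)
  (anchor : ∀ i : ℕ, F (i + 1) →ₗ[S] F i)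
  (hanchor : ∀ (i : ℕ) (x : F (i + 1)),
    d (x : D) - ((anchor i x : F i) : D) ∈ auxE F i)
  (hexact : ∀ i, LinearMap.ker (anchor i) = LinearMap.range (anchor (i + 1)))
  (hdisj : ∀ i, Disjoint (auxE F i) (F i))

include hd2 hflag hanchor hexact hdisj

lemma aux_descend :
    ∀ t, ∀ x ∈ auxE F (t + 1), d x = 0 → ∃ z ∈ F 0, ∃ y, x = z + d y := by
  intro t
  induction t with
  | zero =>
    intro x hx _
    rw [auxE_succ, auxE_zero, bot_sup_eq] at hx
    exact ⟨x, hx, 0, by simp⟩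
  | succ t ih =>
    intro x hx hdx
    rw [auxE_succ] at hx
    obtain ⟨a, ha, b, hb, rfl⟩ := Submodule.mem_sup.mp hx
    -- the top component `b` is killed by the anchor
    have hda : d a ∈ auxE F t := aux_dE hflag t a ha
    have hrb : d b - ((anchor t ⟨b, hb⟩ : F t) : D) ∈ auxE F t := hanchor t ⟨b, hb⟩
    have hsum : d a + d b = 0 := by
      have := hdx; rwa [map_add] at this
    have hmem : ((anchor t ⟨b, hb⟩ : F t) : D) ∈ auxE F t := by
      have : ((anchor t ⟨b, hb⟩ : F t) : D) =
          -(d a) - (d b - ((anchor t ⟨b, hb⟩ : F t) : D)) := by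
        have : d b = -(d a) := by linear_combination (norm := abel) hsum
        rw [this]; abel
      rw [this]
      exact sub_mem (neg_mem hda) hrb
    have hzero : anchor t ⟨b, hb⟩ = 0 := by
      have := (hdisj t).le_bot ⟨hmem, (anchor t ⟨b, hb⟩).2⟩
      exact Subtype.ext (by simpa using this)
    have : (⟨b, hb⟩ : F (t + 1)) ∈ LinearMap.range (anchor (t + 1)) := by
      rw [← hexact t]; exact hzero
    obtain ⟨c, hc⟩ := this
    have hdc : d (c : D) - ((anchor (t + 1) c : F (t + 1)) : D) ∈ auxE F (t + 1) :=
      hanchor (t + 1) c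
    have hxc : a + b - d (c : D) ∈ auxE F (t + 1) := by
      have hb' : ((anchor (t + 1) c : F (t + 1)) : D) = b := by rw [hc]
      have : a + b - d (c : D) =
          a - (d (c : D) - ((anchor (t + 1) c : F (t + 1)) : D)) := by
        rw [hb']; abel
      rw [this]
      exact sub_mem ha hdc
    have hdxc : d (a + b - d (c : D)) = 0 := by
      have h2 : d (d (c : D)) = 0 := by
        have := DFunLike.congr_fun hd2 (c : D)
        simpa [Module.End.mul_apply] using this
      rw [map_sub, hdx, h2, sub_zero]
    obtain ⟨z, hz, y, hy⟩ := ih _ hxc hdxc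
    exact ⟨z, hz, y + (c : D), by rw [map_add]; linear_combination (norm := abel) hy⟩

lemma aux_inject :
    ∀ s, ∀ z ∈ auxE F (s + 1), ∀ hz0 : d z ∈ F 0,
      ∃ w : F 1, ((anchor 0 w : F 0) : D) = d z := by
  intro s
  induction s with
  | zero =>
    intro z hz _
    rw [auxE_succ, auxE_zero, bot_sup_eq] at hz
    have : d z ∈ auxE F 0 := hflag 0 z hz
    rw [auxE_zero] at this
    exact ⟨0, by simp [(Submodule.mem_bot S).mp this]⟩
  | succ s ih =>
    intro z hz hz0
    rw [auxE_succ] at hz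
    obtain ⟨a, ha, b, hb, rfl⟩ := Submodule.mem_sup.mp hz
    rcases Nat.eq_zero_or_pos s with hs | hs
    · -- s = 0 : z = a + b with a ∈ F 0, b ∈ F 1, and d z = anchor 0 b exactly
      subst hs
      rw [auxE_succ, auxE_zero, bot_sup_eq] at ha
      have hda : d a ∈ auxE F 0 := hflag 0 a ha
      rw [auxE_zero] at hda
      have hda' : d a = 0 := (Submodule.mem_bot S).mp hda
      have hrb : d b - ((anchor 0 ⟨b, hb⟩ : F 0) : D) ∈ auxE F 0 := hanchor 0 ⟨b, hb⟩
      rw [auxE_zero] at hrb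
      have hrb' : d b = ((anchor 0 ⟨b, hb⟩ : F 0) : D) := by
        have := (Submodule.mem_bot S).mp hrb
        linear_combination (norm := abel) this
      exact ⟨⟨b, hb⟩, by simp only [map_add, hda', zero_add]; exact hrb'.symm⟩
    · -- s ≥ 1 : kill the top component b ∈ F (s+1)
      have hda : d a ∈ auxE F s := aux_dE hflag s a ha
      have hrb : d b - ((anchor s ⟨b, hb⟩ : F s) : D) ∈ auxE F s := hanchor s ⟨b, hb⟩
      have hdz : d (a + b) ∈ auxE F s := auxE_mono F hs (auxF_le_auxE F Nat.one_pos hz0)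
      have hmem : ((anchor s ⟨b, hb⟩ : F s) : D) ∈ auxE F s := by
        have heq : ((anchor s ⟨b, hb⟩ : F s) : D) =
            d (a + b) - d a - (d b - ((anchor s ⟨b, hb⟩ : F s) : D)) := by
          rw [map_add]; abel
        rw [heq]
        exact sub_mem (sub_mem hdz hda) hrb
      have hzero : anchor s ⟨b, hb⟩ = 0 := by
        have := (hdisj s).le_bot ⟨hmem, (anchor s ⟨b, hb⟩).2⟩
        exact Subtype.ext (by simpa using this)
      have : (⟨b, hb⟩ : F (s + 1)) ∈ LinearMap.range (anchor (s + 1)) := by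
        rw [← hexact s]; exact hzero
      obtain ⟨c, hc⟩ := this
      have hdc : d (c : D) - ((anchor (s + 1) c : F (s + 1)) : D) ∈ auxE F (s + 1) :=
        hanchor (s + 1) c
      have hxc : a + b - d (c : D) ∈ auxE F (s + 1) := by
        have hb' : ((anchor (s + 1) c : F (s + 1)) : D) = b := by rw [hc]
        have heq : a + b - d (c : D) =
            a - (d (c : D) - ((anchor (s + 1) c : F (s + 1)) : D)) := by
          rw [hb']; abel
        rw [heq]
        exact sub_mem ha hdc
      have hddc : d (d (c : D)) = 0 := by
        have := DFunLike.congr_fun hd2 (c : D)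
        simpa [Module.End.mul_apply] using this
      have hdz' : d (a + b - d (c : D)) ∈ F 0 := by
        rw [map_sub, hddc, sub_zero]; exact hz0
      obtain ⟨w, hw⟩ := ih _ hxc hdz'
      refine ⟨w, ?_⟩
      rw [hw, map_sub, hddc, sub_zero]

end Aux

/-- Let `D = ⊕_{i=0}^{ℓ} F i` be a free flag differential module anchored on a complex `F`
(so the differential `d` restricted to `F i` maps into `⊕_{j<i} F j`, and the induced
component maps `F i → F (i-1)` are the differentials of the anchor).  If the anchor is a
resolution of a module `M` (exact in positive degrees, with cokernel `M` at position `0`),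
then the homology `ker d ⧸ im d` of the differential module `D` is isomorphic to `M`. -/
theorem stmt15 {S D M : Type*} [CommRing S]
    [AddCommGroup D] [Module S D] [AddCommGroup M] [Module S M]
    (ℓ : ℕ) (F : ℕ → Submodule S D)
    (hbound : ∀ i, ℓ < i → F i = ⊥)
    (hInternal : DirectSum.IsInternal fun i => F i)
    (hfree : ∀ i, Module.Free S (F i))
    (d : Module.End S D) (hd2 : d * d = 0)
    (hflag : ∀ i, ∀ x ∈ F i, d x ∈ ⨆ j, ⨆ _ : j < i, F j)
    (anchor : ∀ i : ℕ, F (i + 1) →ₗ[S] F i)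
    (hanchor : ∀ (i : ℕ) (x : F (i + 1)),
      d (x : D) - ((anchor i x : F i) : D) ∈ ⨆ j, ⨆ _ : j < i, F j)
    (aug : F 0 →ₗ[S] M) (haugSurj : Function.Surjective aug)
    (hexact0 : LinearMap.ker aug = LinearMap.range (anchor 0))
    (hexact : ∀ i, LinearMap.ker (anchor i) = LinearMap.range (anchor (i + 1))) :
    Nonempty
      ((LinearMap.ker d ⧸ (LinearMap.range d).comap (LinearMap.ker d).subtype)
        ≃ₗ[S] M) := by
  classical
  have hflag' : ∀ i, ∀ x ∈ F i, d x ∈ auxE F i := hflag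
  have hanchor' : ∀ (i : ℕ) (x : F (i + 1)),
      d (x : D) - ((anchor i x : F i) : D) ∈ auxE F i := hanchor
  have hdisj : ∀ i, Disjoint (auxE F i) (F i) := by
    intro i
    have h1 : auxE F i ≤ ⨆ j, ⨆ _ : j ≠ i, F j :=
      iSup_le fun j => iSup_le fun hj =>
        le_iSup_of_le j (le_iSup_of_le (Nat.ne_of_lt hj) le_rfl)
    exact ((hInternal.submodule_iSupIndep i).symm.mono_left h1)
  have hTop : auxE F (ℓ + 1) = ⊤ := by
    apply le_antisymm le_top
    rw [← hInternal.submodule_iSup_eq_top]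
    refine iSup_le fun j => ?_
    rcases lt_or_ge j (ℓ + 1) with h | h
    · exact auxF_le_auxE F h
    · rw [hbound j h]; exact bot_le
  -- `F 0` lands in the kernel of `d`
  have hF0 : ∀ x ∈ F 0, d x = 0 := by
    intro x hx
    have : d x ∈ auxE F 0 := hflag' 0 x hx
    rw [auxE_zero] at this
    exact (Submodule.mem_bot S).mp this
  set R' : Submodule S (LinearMap.ker d) :=
    (LinearMap.range d).comap (LinearMap.ker d).subtype with hR'
  let Φ : F 0 →ₗ[S] (LinearMap.ker d ⧸ R') :=
    R'.mkQ.comp (LinearMap.codRestrict (LinearMap.ker d) (F 0).subtype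
      (fun c => LinearMap.mem_ker.mpr (hF0 c.1 c.2)))
  have hΦsurj : Function.Surjective Φ := by
    intro q
    obtain ⟨x, rfl⟩ := Submodule.Quotient.mk_surjective R' q
    have hx1 : (x : D) ∈ auxE F (ℓ + 1) := hTop ▸ Submodule.mem_top
    have hdx : d (x : D) = 0 := x.2
    obtain ⟨z, hz, y, hy⟩ :=
      aux_descend hd2 hflag' anchor hanchor' hexact hdisj ℓ (x : D) hx1 hdx
    refine ⟨⟨z, hz⟩, ?_⟩
    show Submodule.Quotient.mk _ = Submodule.Quotient.mk x
    rw [Submodule.Quotient.eq]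
    refine Submodule.mem_comap.mpr ⟨-y, ?_⟩
    show d (-y) = z - (x : D)
    rw [map_neg, hy]
    abel
  have hker : LinearMap.ker Φ = LinearMap.ker aug := by
    ext x
    constructor
    · intro hx
      have hx' : ((LinearMap.codRestrict (LinearMap.ker d) (F 0).subtype
          (fun c => LinearMap.mem_ker.mpr (hF0 c.1 c.2)) x : LinearMap.ker d)) ∈ R' := by
        have := LinearMap.mem_ker.mp hx
        rwa [LinearMap.comp_apply, Submodule.mkQ_apply, Submodule.Quotient.mk_eq_zero] at this
      obtain ⟨z, hz⟩ := hx'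
      have hzE : z ∈ auxE F (ℓ + 1) := hTop ▸ Submodule.mem_top
      have hdz : d z ∈ F 0 := by
        have : d z = (x : D) := hz
        rw [this]; exact x.2
      obtain ⟨w, hw⟩ :=
        aux_inject hd2 hflag' anchor hanchor' hexact hdisj ℓ z hzE hdz
      have hxw : anchor 0 w = x := by
        apply Subtype.ext
        have : d z = (x : D) := hz
        rw [← this, ← hw]
      rw [LinearMap.mem_ker, ← hxw]
      have : anchor 0 w ∈ LinearMap.ker aug := by
        rw [hexact0]; exact ⟨w, rfl⟩
      exact LinearMap.mem_ker.mp this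
    · intro hx
      have : x ∈ LinearMap.range (anchor 0) := hexact0 ▸ hx
      obtain ⟨w, hw⟩ := this
      have hdw : d (w : D) = (x : D) := by
        have h1 : d (w : D) - ((anchor 0 w : F 0) : D) ∈ auxE F 0 := hanchor' 0 w
        rw [auxE_zero] at h1
        have h2 := (Submodule.mem_bot S).mp h1
        have h3 : ((anchor 0 w : F 0) : D) = (x : D) := by rw [hw]
        linear_combination (norm := abel) h2 + h3
      rw [LinearMap.mem_ker, LinearMap.comp_apply, Submodule.mkQ_apply,
        Submodule.Quotient.mk_eq_zero]
      exact ⟨(w : D), hdw⟩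
  exact ⟨(LinearMap.quotKerEquivOfSurjective Φ hΦsurj).symm.trans
    ((Submodule.quotEquivOfEq _ _ hker).trans
      (LinearMap.quotKerEquivOfSurjective aug haugSurj))⟩
end
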